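/- arXiv:2304.04757 — 2 statements merged into one kernel-verified Lean document; each statement's English description precedes it below -/
import Mathlib

section
/- There exists a function f from pairs of point configurations to the reals — namely f((b1,b2),(c1,c2)) = ⟨b1 − b2, c1 − c2⟩ for b1,b2,c1,c2 ∈ ℝ³ — such that: (i) f is invariant under simultaneous rigid motions, i.e. f((R b1 + t, R b2 + t),(R c1 + t, R c2 + t)) = f((b1,b2),(c1,c2)) for every rotation R ∈ SO(3) and translation t ∈ ℝ³; and (ii) f cannot be factored through separately-invariant features: there do NOT exist types α, β, functions s : ℝ³×ℝ³ → α and u : ℝ³×ℝ³ → β each invariant under all rigid motions of its own argument, and a function ρ : α × β → ℝ, with f((B),(C)) = ρ(s(B), u(C)) for all B, C. (Witnessed by choosing B, a rotated copy R•B, and C with f(B,C) ≠ f(R•B, C).) -/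
noncomputable section

open scoped RealInnerProductSpace

/-- 3-dimensional Euclidean space. -/
abbrev E3 : Type := EuclideanSpace ℝ (Fin 3)

/-- The cross product on `E3`. -/
def cross3 (v w : E3) : E3 :=
  (WithLp.equiv 2 (Fin 3 → ℝ)).symm
    ![v 1 * w 2 - v 2 * w 1, v 2 * w 0 - v 0 * w 2, v 0 * w 1 - v 1 * w 0]

/-- A linear isometry of `E3` is a rotation if its determinant is `1`. -/
def IsRotation (R : E3 ≃ₗᵢ[ℝ] E3) : Prop :=
  LinearMap.det (R.toLinearEquiv : E3 →ₗ[ℝ] E3) = 1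


/-!
The inner product of the difference vectors only sees relative positions, so it is invariant
under simultaneous rigid motions. If it were `ρ (s B, u C)` with `s` invariant, it would be
unchanged by rotating `B` alone; but for `B = C = (e₀, 0)` and the rotation by `π` about the third
axis, which sends `e₀` to `-e₀`, its value `1` becomes `-1`.
-/

theorem apply_eq_of_eq_comp_prod {X Y α β γ : Type*} {f : X → Y → γ} {s : X → α} {u : Y → β}
    {ρ : α × β → γ} (hρ : ∀ B C, f B C = ρ (s B, u C)) {B B' : X} (hs : s B' = s B) (C : Y) :
    f B' C = f B C := by
  rw [hρ, hρ, hs]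

section RigidMotion

variable {𝕜 V : Type*} [RCLike 𝕜] [NormedAddCommGroup V] [InnerProductSpace 𝕜 V]

theorem inner_sub_sub_map_add_eq (R : V →ₗᵢ[𝕜] V) (t b₁ b₂ c₁ c₂ : V) :
    inner 𝕜 ((R b₁ + t) - (R b₂ + t)) ((R c₁ + t) - (R c₂ + t)) = inner 𝕜 (b₁ - b₂) (c₁ - c₂) := by
  simp only [add_sub_add_right_eq_sub, ← map_sub, R.inner_map_map]

/-- In dimension `3`, the reflection through a line is the rotation by `π` about it. -/
theorem det_reflection_span_singleton [FiniteDimensional 𝕜 V] (hV : Module.finrank 𝕜 V = 3)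
    {w : V} (hw : w ≠ 0) : LinearMap.det (𝕜 ∙ w).reflection.toLinearMap = 1 := by
  have : Fact (Module.finrank 𝕜 V = 2 + 1) := ⟨hV⟩
  rw [Submodule.det_reflection, Submodule.finrank_orthogonal_span_singleton (n := 2) hw]
  norm_num

end RigidMotion

theorem isRotation_reflection_span_singleton {w : E3} (hw : w ≠ 0) :
    IsRotation (ℝ ∙ w).reflection :=
  det_reflection_span_singleton finrank_euclideanSpace_fin hw

theorem stmt_0 :
    ∃ f : (E3 × E3) → (E3 × E3) → ℝ,
      (∀ B C : E3 × E3, f B C = ⟪B.1 - B.2, C.1 - C.2⟫) ∧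
      (∀ (R : E3 ≃ₗᵢ[ℝ] E3), IsRotation R → ∀ (t b1 b2 c1 c2 : E3),
          f (R b1 + t, R b2 + t) (R c1 + t, R c2 + t) = f (b1, b2) (c1, c2)) ∧
      ¬ ∃ (α β : Type) (s : E3 × E3 → α) (u : E3 × E3 → β) (ρ : α × β → ℝ),
          (∀ (R : E3 ≃ₗᵢ[ℝ] E3), IsRotation R → ∀ (t b1 b2 : E3),
              s (R b1 + t, R b2 + t) = s (b1, b2)) ∧
          (∀ (R : E3 ≃ₗᵢ[ℝ] E3), IsRotation R → ∀ (t c1 c2 : E3),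
              u (R c1 + t, R c2 + t) = u (c1, c2)) ∧
          (∀ B C : E3 × E3, f B C = ρ (s B, u C)) := by
  refine ⟨fun B C => ⟪B.1 - B.2, C.1 - C.2⟫, fun B C => rfl,
    fun R _ => inner_sub_sub_map_add_eq R.toLinearIsometry, ?_⟩
  rintro ⟨α, β, s, u, ρ, hs, -, hρ⟩
  set e₀ : E3 := EuclideanSpace.single 0 1
  set R := (ℝ ∙ (EuclideanSpace.single 2 1 : E3)).reflection
  have hR : IsRotation R := isRotation_reflection_span_singleton (by simp)
  have hRe₀ : R e₀ = -e₀ := by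
    refine Submodule.reflection_mem_subspace_orthogonalComplement_eq_neg ?_
    simp [Submodule.mem_orthogonal_singleton_iff_inner_right, EuclideanSpace.inner_single_left, e₀]
  have hflip := apply_eq_of_eq_comp_prod hρ (hs R hR 0 e₀ 0) (e₀, 0)
  have he₀ : ⟪e₀, e₀⟫ = 1 := by simp [e₀]
  simp only [add_zero, map_zero, sub_zero, hRe₀, inner_neg_left, he₀] at hflip
  norm_num at hflip
end
end

section
/- Let x, y ∈ ℝ³ be linearly independent, let (e1, e2, e3) be the edge frame e1 = (x − y)/‖x − y‖, e2 = (x × y)/‖x × y‖, e3 = e1 × e2, and let v ∈ ℝ³. Then for every orthogonal linear map R of ℝ³ (determinant +1 or −1), the modified scalarization with absolute value on the second coordinate is invariant: ⟨R v, e1(R x, R y)⟩ = ⟨v, e1(x,y)⟩, |⟨R v, e2(R x, R y)⟩| = |⟨v, e2(x,y)⟩|, and ⟨R v, e3(R x, R y)⟩ = ⟨v, e3(x,y)⟩. -/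
noncomputable section

open scoped RealInnerProductSpace

/-- First vector of the LEFTNet edge-wise frame: `(x - y)/‖x - y‖`. -/
def fr1 (x y : E3) : E3 := ‖x - y‖⁻¹ • (x - y)

/-- Second vector of the LEFTNet edge-wise frame: `(x × y)/‖x × y‖`. -/
def fr2 (x y : E3) : E3 := ‖cross3 x y‖⁻¹ • cross3 x y

/-- Third vector of the LEFTNet edge-wise frame: `e1 × e2`. -/
def fr3 (x y : E3) : E3 := cross3 (fr1 x y) (fr2 x y)

/-! A linear isometry `R` satisfies `R a × R b = det R • R (a × b)`, because the triple product
`⟪a × b, z⟫` is a determinant and `det R = ±1`. Hence `e1` and `e3 = e1 × e2` are carried to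
`R e1` and `R e3`, while the pseudo-vector `e2` is carried to `det R • R e2`; the sign is removed
by the absolute value. -/

open Matrix

theorem LinearIsometryEquiv.abs_det_eq_one {U : Type*} [NormedAddCommGroup U] [InnerProductSpace ℝ U]
    [FiniteDimensional ℝ U] (R : U ≃ₗᵢ[ℝ] U) :
    |LinearMap.det (R.toLinearEquiv : U →ₗ[ℝ] U)| = 1 :=
  (LinearMap.normDet_eq_abs_det _).symm.trans (LinearIsometry.normDet_eq_one R.toLinearIsometry)

lemma cross3_eq_toLp_cross (a b : E3) : cross3 a b = WithLp.toLp 2 (a.ofLp ⨯₃ b.ofLp) := by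
  rw [cross3, cross_apply]; rfl

lemma cross3_smul_right (c : ℝ) (a b : E3) : cross3 a (c • b) = c • cross3 a b := by
  simp [cross3_eq_toLp_cross]

lemma inner_cross3_eq_det (a b z : E3) :
    ⟪cross3 a b, z⟫ = (EuclideanSpace.basisFun (Fin 3) ℝ).toBasis.det ![a, b, z] := by
  have hrows : ((EuclideanSpace.basisFun (Fin 3) ℝ).toBasis.toMatrix ![a, b, z])ᵀ =
      ![a.ofLp, b.ofLp, z.ofLp] := by
    ext i j
    fin_cases i <;> simp [Module.Basis.toMatrix_apply]
  rw [Module.Basis.det_apply, ← det_transpose, hrows, ← triple_product_eq_det,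
    ← triple_product_permutation, cross3_eq_toLp_cross, EuclideanSpace.inner_eq_star_dotProduct]
  simp

lemma inner_cross3_map_map (f : E3 →ₗ[ℝ] E3) (a b z : E3) :
    ⟪cross3 (f a) (f b), f z⟫ = LinearMap.det f * ⟪cross3 a b, z⟫ := by
  have hcomp : ![f a, f b, f z] = f ∘ ![a, b, z] := by
    ext i : 1
    fin_cases i <;> rfl
  rw [inner_cross3_eq_det, inner_cross3_eq_det, hcomp, Module.Basis.det_comp]

lemma cross3_map (R : E3 ≃ₗᵢ[ℝ] E3) (a b : E3) :
    cross3 (R a) (R b) = LinearMap.det (R.toLinearEquiv : E3 →ₗ[ℝ] E3) • R (cross3 a b) := by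
  refine ext_inner_right ℝ fun w => ?_
  rw [← R.apply_symm_apply w, real_inner_smul_left, R.inner_map_map]
  exact inner_cross3_map_map (R.toLinearEquiv : E3 →ₗ[ℝ] E3) a b (R.symm w)

section Frame

variable (R : E3 ≃ₗᵢ[ℝ] E3) (x y : E3)

lemma fr1_map : fr1 (R x) (R y) = R (fr1 x y) := by
  rw [fr1, fr1, ← map_sub, R.norm_map, map_smul]

lemma fr2_map :
    fr2 (R x) (R y) = LinearMap.det (R.toLinearEquiv : E3 →ₗ[ℝ] E3) • R (fr2 x y) := by
  rw [fr2, fr2, cross3_map, norm_smul, R.norm_map, Real.norm_eq_abs, R.abs_det_eq_one,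
    one_mul, map_smul, smul_comm]

lemma fr3_map : fr3 (R x) (R y) = R (fr3 x y) := by
  rw [fr3, fr3, fr1_map, fr2_map, cross3_smul_right, cross3_map, smul_smul,
    ← abs_mul_abs_self, R.abs_det_eq_one, one_mul, one_smul]

end Frame

theorem stmt_8_general (x y : E3) (v : E3)
    (R : E3 ≃ₗᵢ[ℝ] E3) :
    ⟪R v, fr1 (R x) (R y)⟫ = ⟪v, fr1 x y⟫ ∧
    |⟪R v, fr2 (R x) (R y)⟫| = |⟪v, fr2 x y⟫| ∧
    ⟪R v, fr3 (R x) (R y)⟫ = ⟪v, fr3 x y⟫ := by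
  refine ⟨?_, ?_, ?_⟩
  · rw [fr1_map, R.inner_map_map]
  · rw [fr2_map, real_inner_smul_right, R.inner_map_map, abs_mul, R.abs_det_eq_one, one_mul]
  · rw [fr3_map, R.inner_map_map]

theorem stmt_8 (x y : E3) (h : LinearIndependent ℝ ![x, y]) (v : E3)
    (R : E3 ≃ₗᵢ[ℝ] E3) :
    ⟪R v, fr1 (R x) (R y)⟫ = ⟪v, fr1 x y⟫ ∧
    |⟪R v, fr2 (R x) (R y)⟫| = |⟪v, fr2 x y⟫| ∧
    ⟪R v, fr3 (R x) (R y)⟫ = ⟪v, fr3 x y⟫ :=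
  stmt_8_general x y v R
end
end
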